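/- Let F be a field and G = GL(4, F). Let B be the Borel subgroup of upper triangular matrices, N the unipotent upper triangular subgroup, and w_1, w_2, w_3 the simple reflections (permutation matrices for transpositions (12), (23), (34)). Then every element γ of the Bruhat cell B·w_2w_3w_2·N, written in Bruhat normal form γ = u_1 t w_2w_3w_2 u_2 with u_1 ∈ N having (2,3)-entry a, t diagonal, and u_2 ∈ N having (2,3)-entry b, satisfies: if a + b ≠ 0 then γ is conjugate by an element of w_2 N_2 (where N_2 is the one-parameter unipotent subgroup for the simple root α_2) to an element of B·w_2w_3·N, and if a + b = 0 then γ is conjugate by an element of w_2 N_2 to an element of B·w_3·N. -/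

import Mathlib

open Matrix

variable {F : Type*} [Field F]

/-- The permutation matrix of `σ` (column convention). -/
def permM {n : ℕ} (F : Type*) [Field F] (σ : Equiv.Perm (Fin n)) :
    Matrix (Fin n) (Fin n) F :=
  Matrix.of fun i j => if σ j = i then 1 else 0

/-- `g` lies in the Borel subgroup `B` of upper triangular matrices. -/
def inB {n : ℕ} (g : GL (Fin n) F) : Prop :=
  ∀ i j : Fin n, j < i → (g : Matrix (Fin n) (Fin n) F) i j = 0

/-- `g` lies in the unipotent upper triangular subgroup `N`. -/
def inN {n : ℕ} (g : GL (Fin n) F) : Prop :=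
  inB g ∧ ∀ i : Fin n, (g : Matrix (Fin n) (Fin n) F) i i = 1

/-- The Bruhat cell `B·w·N`. -/
def cell {n : ℕ} (w : GL (Fin n) F) : Set (GL (Fin n) F) :=
  {γ | ∃ b u : GL (Fin n) F, inB b ∧ inN u ∧ γ = b * w * u}

/-- `g` lies in the one-parameter root subgroup `N₂` for the second simple root of `GL(4)`:
identity except possibly at the `(2,3)` entry (0-based `(1,2)`). -/
def inN2 (g : GL (Fin 4) F) : Prop :=
  ∀ i j : Fin 4, ¬(i = 1 ∧ j = 2) →
    (g : Matrix (Fin 4) (Fin 4) F) i j = if i = j then 1 else 0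

/-!
Write `x(c)` for the root subgroup `N₂` and split `u₁ = x(a) u₁'`, `u₂ = u₂' x(b)` with `u₁', u₂'`
in the unipotent radical of the parabolic subgroup attached to `w₂`, which `w₂` normalises.
Conjugating by `w₂ x(b)` turns `γ` into
`(w₂ x(a + b) w₂⁻¹) · (w₂ u₁' t w₂⁻¹) · w₃ · (w₂ u₂' w₂⁻¹)`, whose middle factor lies in `B` and
last factor in `N`. If `a + b = 0` the first factor is trivial. Otherwise the rank-one relation
`w₂ x(s) w₂⁻¹ ∈ B w₂ x(s⁻¹)` leaves an element of `B · w₂ B w₃ · N`, and `w₂ B w₃ ⊆ B w₂w₃ N`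
because `w₃⁻¹` keeps the root `α₂` positive.
-/

section PermutationMatrix

variable {n : ℕ}

theorem permM_mul_apply (σ : Equiv.Perm (Fin n)) (M : Matrix (Fin n) (Fin n) F) (i j : Fin n) :
    (permM F σ * M) i j = M (σ.symm i) j := by
  simp [permM, Matrix.mul_apply, ← Equiv.eq_symm_apply]

theorem mul_permM_apply (σ : Equiv.Perm (Fin n)) (M : Matrix (Fin n) (Fin n) F) (i j : Fin n) :
    (M * permM F σ) i j = M i (σ j) := by
  simp [permM, Matrix.mul_apply]

theorem permM_mul_permM (σ τ : Equiv.Perm (Fin n)) :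
    permM F σ * permM F τ = permM F (σ * τ) := by
  ext i j
  rw [permM_mul_apply]
  simp only [permM, of_apply, Equiv.Perm.mul_apply]
  exact if_congr (Equiv.eq_symm_apply σ) rfl rfl

theorem permM_one : permM F (1 : Equiv.Perm (Fin n)) = 1 := by
  ext i j
  simp [permM, Matrix.one_apply, eq_comm]

theorem val_inv_of_val_eq_permM {w : GL (Fin n) F} {σ : Equiv.Perm (Fin n)}
    (hw : (w : Matrix (Fin n) (Fin n) F) = permM F σ) :
    ((w⁻¹ : GL (Fin n) F) : Matrix (Fin n) (Fin n) F) = permM F σ⁻¹ := by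
  rw [Matrix.coe_units_inv, hw]
  exact Matrix.inv_eq_left_inv (by rw [permM_mul_permM, inv_mul_cancel, permM_one])

theorem inv_eq_self_of_val_eq_permM_swap {w : GL (Fin n) F} {i j : Fin n}
    (hw : (w : Matrix (Fin n) (Fin n) F) = permM F (Equiv.swap i j)) : w⁻¹ = w :=
  Units.ext <| by rw [val_inv_of_val_eq_permM hw, Equiv.swap_inv, hw]

theorem conj_apply_of_val_eq_permM {w : GL (Fin n) F} {σ : Equiv.Perm (Fin n)}
    (hw : (w : Matrix (Fin n) (Fin n) F) = permM F σ) (g : GL (Fin n) F) (i j : Fin n) :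
    ((w * g * w⁻¹ : GL (Fin n) F) : Matrix (Fin n) (Fin n) F) i j =
      (g : Matrix (Fin n) (Fin n) F) (σ.symm i) (σ.symm j) := by
  rw [Units.val_mul, Units.val_mul, val_inv_of_val_eq_permM hw, hw, mul_permM_apply,
    permM_mul_apply, Equiv.Perm.inv_def]

theorem swap_lt_swap_of_covBy {i j k l : Fin n} (hij : i ⋖ j) (hkl : k < l)
    (h : Equiv.swap i j l < Equiv.swap i j k) : k = i ∧ l = j := by
  rw [Fin.covBy_iff, Nat.covBy_iff_add_one_eq] at hij
  simp only [Equiv.swap_apply_def] at h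
  simp only [Fin.lt_def, Fin.ext_iff] at *
  split_ifs at h <;> omega

theorem permM_mul_transvection_mul_permM_inv (σ : Equiv.Perm (Fin n)) (i j : Fin n)
    (c : F) : permM F σ * transvection i j c * permM F σ⁻¹ = transvection (σ i) (σ j) c := by
  ext k l
  rw [mul_permM_apply, permM_mul_apply]
  simp only [transvection, Matrix.add_apply, one_apply, single_apply, Equiv.Perm.inv_def,
    Equiv.eq_symm_apply, Equiv.apply_symm_apply]

end PermutationMatrix

section Triangular

variable {n : ℕ}

theorem inB_iff_isUpperTriangular {g : GL (Fin n) F} :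
    inB g ↔ (g : Matrix (Fin n) (Fin n) F).IsUpperTriangular :=
  ⟨fun h i j => h i j, fun h _ _ hji => h hji⟩

theorem inB_mul {g h : GL (Fin n) F} (hg : inB g) (hh : inB h) : inB (g * h) :=
  inB_iff_isUpperTriangular.2 <|
    (inB_iff_isUpperTriangular.1 hg).mul (inB_iff_isUpperTriangular.1 hh)

theorem Matrix.IsUpperTriangular.mul_apply_self {m R : Type*} [Fintype m] [LinearOrder m]
    [NonUnitalNonAssocSemiring R] {M N : Matrix m m R} (hM : M.IsUpperTriangular)
    (hN : N.IsUpperTriangular) (i : m) : (M * N) i i = M i i * N i i := by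
  rw [Matrix.mul_apply, Finset.sum_eq_single i]
  · intro k _ hki
    rcases hki.lt_or_gt with hki | hki
    · rw [hM hki, zero_mul]
    · rw [hN hki, mul_zero]
  · simp

theorem inN_mul {g h : GL (Fin n) F} (hg : inN g) (hh : inN h) : inN (g * h) := by
  refine ⟨inB_mul hg.1 hh.1, fun i => ?_⟩
  rw [Units.val_mul, (inB_iff_isUpperTriangular.1 hg.1).mul_apply_self
    (inB_iff_isUpperTriangular.1 hh.1), hg.2, hh.2, one_mul]

theorem inB.apply_self_ne_zero {g : GL (Fin n) F} (hg : inB g) (i : Fin n) :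
    (g : Matrix (Fin n) (Fin n) F) i i ≠ 0 := by
  have hdet := (Matrix.isUnit_iff_isUnit_det _).1 g.isUnit |>.ne_zero
  rw [Matrix.det_of_isUpperTriangular (inB_iff_isUpperTriangular.1 hg)] at hdet
  exact Finset.prod_ne_zero_iff.1 hdet i (Finset.mem_univ i)

theorem inB_conj {w g : GL (Fin n) F} {σ : Equiv.Perm (Fin n)}
    (hw : (w : Matrix (Fin n) (Fin n) F) = permM F σ) (hg : inB g)
    (hσ : ∀ k l, k < l → σ l < σ k → (g : Matrix (Fin n) (Fin n) F) k l = 0) :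
    inB (w * g * w⁻¹) := by
  intro i j hji
  rw [conj_apply_of_val_eq_permM hw]
  rcases lt_trichotomy (σ.symm i) (σ.symm j) with h | h | h
  · exact hσ _ _ h (by simpa using hji)
  · exact absurd (σ.symm.injective h) hji.ne'
  · exact hg _ _ h

theorem inN_conj {w g : GL (Fin n) F} {σ : Equiv.Perm (Fin n)}
    (hw : (w : Matrix (Fin n) (Fin n) F) = permM F σ) (hg : inN g)
    (hσ : ∀ k l, k < l → σ l < σ k → (g : Matrix (Fin n) (Fin n) F) k l = 0) :
    inN (w * g * w⁻¹) :=
  ⟨inB_conj hw hg.1 hσ, fun i => by rw [conj_apply_of_val_eq_permM hw]; exact hg.2 _⟩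

theorem inB_conj_swap {w g : GL (Fin n) F} {i j : Fin n}
    (hw : (w : Matrix (Fin n) (Fin n) F) = permM F (Equiv.swap i j)) (hij : i ⋖ j)
    (hg : inB g) (hgij : (g : Matrix (Fin n) (Fin n) F) i j = 0) : inB (w * g * w⁻¹) :=
  inB_conj hw hg fun _ _ hkl hinv => by
    obtain ⟨rfl, rfl⟩ := swap_lt_swap_of_covBy hij hkl hinv
    exact hgij

theorem inN_conj_swap {w g : GL (Fin n) F} {i j : Fin n}
    (hw : (w : Matrix (Fin n) (Fin n) F) = permM F (Equiv.swap i j)) (hij : i ⋖ j)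
    (hg : inN g) (hgij : (g : Matrix (Fin n) (Fin n) F) i j = 0) : inN (w * g * w⁻¹) :=
  ⟨inB_conj_swap hw hij hg.1 hgij, fun k => by rw [conj_apply_of_val_eq_permM hw]; exact hg.2 _⟩

end Triangular

section Transvection

variable {n : ℕ} {i j : Fin n}

def transvectionGL (hij : i ≠ j) (c : F) : GL (Fin n) F :=
  SpecialLinearGroup.toGL (SpecialLinearGroup.transvection hij c)

theorem val_transvectionGL (hij : i ≠ j) (c : F) :
    (transvectionGL hij c : Matrix (Fin n) (Fin n) F) = transvection i j c := rfl

theorem transvectionGL_add (hij : i ≠ j) (c d : F) :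
    transvectionGL hij (c + d) = transvectionGL hij c * transvectionGL hij d := by
  rw [transvectionGL, SpecialLinearGroup.transvection_add, map_mul]; rfl

theorem transvectionGL_zero (hij : i ≠ j) : transvectionGL hij (0 : F) = 1 := by
  rw [transvectionGL, SpecialLinearGroup.transvection_coeff_zero, map_one]

theorem inN_transvectionGL (hij : i < j) (c : F) : inN (transvectionGL hij.ne c) := by
  refine ⟨fun k l hlk => ?_, fun k => ?_⟩ <;>
    simp only [val_transvectionGL, transvection, Matrix.add_apply, one_apply, single_apply]
  · rw [if_neg hlk.ne', if_neg (by rintro ⟨rfl, rfl⟩; exact lt_asymm hij hlk), add_zero]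
  · rw [if_pos trivial, if_neg (by rintro ⟨rfl, rfl⟩; exact lt_irrefl _ hij), add_zero]

theorem isUpperTriangular_transvection_mul_transvection_mul_permM
    (hij : i < j) {s : F} (hs : s ≠ 0) :
    (transvection j i s * transvection i j (-s⁻¹) *
      permM F (Equiv.swap i j)).IsUpperTriangular := by
  -- on the `{i, j}` block this matrix is `!![-s⁻¹, 1; 0, s]`; elsewhere it is the identity
  intro k l hlk
  rw [mul_permM_apply]
  obtain rfl | hk := eq_or_ne k j
  all_goals
    first | rw [transvection_mul_apply_same] | rw [transvection_mul_apply_of_ne _ _ _ _ ‹k ≠ j›]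
    simp only [transvection, Matrix.add_apply, one_apply, single_apply, Equiv.swap_apply_def]
    simp only [id, Fin.lt_def, Fin.ext_iff] at *
    split_ifs <;> first | omega | simp_all

theorem exists_inB_conj_transvectionGL_eq_mul {w : GL (Fin n) F}
    (hw : (w : Matrix (Fin n) (Fin n) F) = permM F (Equiv.swap i j)) (hij : i < j)
    {s : F} (hs : s ≠ 0) :
    ∃ β, inB β ∧ w * transvectionGL hij.ne s * w⁻¹ = β * w * transvectionGL hij.ne s⁻¹ := by
  refine ⟨w * transvectionGL hij.ne s * w⁻¹ * transvectionGL hij.ne (-s⁻¹) * w⁻¹, ?_, ?_⟩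
  · rw [inB_iff_isUpperTriangular, Units.val_mul, Units.val_mul, Units.val_mul, Units.val_mul,
      val_inv_of_val_eq_permM hw, hw, val_transvectionGL, val_transvectionGL,
      permM_mul_transvection_mul_permM_inv, Equiv.swap_apply_left, Equiv.swap_apply_right,
      Equiv.swap_inv]
    exact isUpperTriangular_transvection_mul_transvection_mul_permM hij hs
  · rw [mul_assoc _ w⁻¹, inv_mul_cancel, mul_one, mul_assoc _ (transvectionGL hij.ne (-s⁻¹)),
      ← transvectionGL_add, neg_add_cancel, transvectionGL_zero, mul_one]

end Transvection

section Decomposition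

variable {n : ℕ} {i j : Fin n}

theorem exists_eq_transvectionGL_mul_of_inN {u : GL (Fin n) F} (hu : inN u) (hij : i < j) :
    ∃ u', inN u' ∧ (u' : Matrix (Fin n) (Fin n) F) i j = 0 ∧
      u = transvectionGL hij.ne ((u : Matrix (Fin n) (Fin n) F) i j) * u' := by
  set c := (u : Matrix (Fin n) (Fin n) F) i j
  refine ⟨transvectionGL hij.ne (-c) * u, inN_mul (inN_transvectionGL hij _) hu, ?_, ?_⟩
  · rw [Units.val_mul, val_transvectionGL, transvection_mul_apply_same, hu.2 j, mul_one,
      add_neg_cancel]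
  · rw [← mul_assoc, ← transvectionGL_add, add_neg_cancel, transvectionGL_zero, one_mul]

theorem exists_eq_mul_transvectionGL_of_inN {u : GL (Fin n) F} (hu : inN u) (hij : i < j) :
    ∃ u', inN u' ∧ (u' : Matrix (Fin n) (Fin n) F) i j = 0 ∧
      u = u' * transvectionGL hij.ne ((u : Matrix (Fin n) (Fin n) F) i j) := by
  set c := (u : Matrix (Fin n) (Fin n) F) i j
  refine ⟨u * transvectionGL hij.ne (-c), inN_mul hu (inN_transvectionGL hij _), ?_, ?_⟩
  · rw [Units.val_mul, val_transvectionGL, mul_transvection_apply_same, hu.2 i, mul_one,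
      add_neg_cancel]
  · rw [mul_assoc, ← transvectionGL_add, neg_add_cancel, transvectionGL_zero, mul_one]

theorem exists_eq_mul_transvectionGL_of_inB {g : GL (Fin n) F} (hg : inB g) (hij : i < j) :
    ∃ g' c, inB g' ∧ (g' : Matrix (Fin n) (Fin n) F) i j = 0 ∧
      g = g' * transvectionGL hij.ne c := by
  set c := (g : Matrix (Fin n) (Fin n) F) i j / (g : Matrix (Fin n) (Fin n) F) i i
  refine ⟨g * transvectionGL hij.ne (-c), c, inB_mul hg (inN_transvectionGL hij _).1, ?_, ?_⟩
  · rw [Units.val_mul, val_transvectionGL, mul_transvection_apply_same, neg_mul,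
      div_mul_cancel₀ _ (hg.apply_self_ne_zero i), add_neg_cancel]
  · rw [mul_assoc, ← transvectionGL_add, neg_add_cancel, transvectionGL_zero, mul_one]

end Decomposition

section Cell

variable {n : ℕ}

theorem mul_mem_cell {b g w : GL (Fin n) F} (hb : inB b) (hg : g ∈ cell w) : b * g ∈ cell w := by
  obtain ⟨b', u, hb', hu, rfl⟩ := hg
  exact ⟨b * b', u, inB_mul hb hb', hu, by simp only [mul_assoc]⟩

theorem mem_cell_mul {g u w : GL (Fin n) F} (hg : g ∈ cell w) (hu : inN u) : g * u ∈ cell w := by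
  obtain ⟨b, u', hb, hu', rfl⟩ := hg
  exact ⟨b, u' * u, hb, inN_mul hu' hu, by simp only [mul_assoc]⟩

theorem mul_mul_mem_cell_of_inB {w w' g : GL (Fin n) F} {i j : Fin n} {τ : Equiv.Perm (Fin n)}
    (hw : (w : Matrix (Fin n) (Fin n) F) = permM F (Equiv.swap i j)) (hij : i ⋖ j)
    (hw' : (w' : Matrix (Fin n) (Fin n) F) = permM F τ) (hτ : τ⁻¹ i < τ⁻¹ j) (hg : inB g) :
    w * g * w' ∈ cell (w * w') := by
  obtain ⟨g', c, hg', hg'ij, rfl⟩ := exists_eq_mul_transvectionGL_of_inB hg hij.lt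
  have hx : inN (w'⁻¹ * transvectionGL hij.lt.ne c * w'⁻¹⁻¹) := by
    refine inN_conj (val_inv_of_val_eq_permM hw') (inN_transvectionGL hij.lt c)
      fun k l hkl hinv => ?_
    rw [val_transvectionGL, transvection, Matrix.add_apply, one_apply_ne hkl.ne, single_apply,
      if_neg, zero_add]
    rintro ⟨rfl, rfl⟩
    exact hinv.not_gt hτ
  rw [inv_inv] at hx
  exact ⟨w * g' * w⁻¹, _, inB_conj_swap hw hij hg' hg'ij, hx, by group⟩

end Cell

theorem inN2_transvectionGL (c : F) :
    inN2 (transvectionGL (by decide : (1 : Fin 4) ≠ 2) c) := by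
  intro k l hkl
  rw [val_transvectionGL, transvection, Matrix.add_apply, single_apply, if_neg (by tauto),
    add_zero, one_apply]

/-- In `GL(4, F)`, write `γ ∈ B·w₂w₃w₂·N` in Bruhat normal form
`γ = u₁ t w₂w₃w₂ u₂` with `u₁, u₂ ∈ N`, `t` diagonal, `a` the `(2,3)`-entry of `u₁` and `b`
the `(2,3)`-entry of `u₂`.  If `a + b ≠ 0` then some `δ ∈ w₂N₂` conjugates `γ` into
`B·w₂w₃·N`, and if `a + b = 0` then some `δ ∈ w₂N₂` conjugates `γ` into `B·w₃·N`. -/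
theorem bruhat_cell_w2w3w2_conjugation (w₂ w₃ : GL (Fin 4) F)
    (hw₂ : (w₂ : Matrix (Fin 4) (Fin 4) F) = permM F (Equiv.swap 1 2))
    (hw₃ : (w₃ : Matrix (Fin 4) (Fin 4) F) = permM F (Equiv.swap 2 3))
    (γ u₁ t u₂ : GL (Fin 4) F) (hu₁ : inN u₁)
    (ht : ∀ i j : Fin 4, i ≠ j → (t : Matrix (Fin 4) (Fin 4) F) i j = 0)
    (hu₂ : inN u₂)
    (hγ : γ = u₁ * t * (w₂ * w₃ * w₂) * u₂)
    (a b : F) (ha : a = (u₁ : Matrix (Fin 4) (Fin 4) F) 1 2)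
    (hb : b = (u₂ : Matrix (Fin 4) (Fin 4) F) 1 2) :
    (a + b ≠ 0 → ∃ ν : GL (Fin 4) F, inN2 ν ∧
        (w₂ * ν) * γ * (w₂ * ν)⁻¹ ∈ cell (w₂ * w₃)) ∧
    (a + b = 0 → ∃ ν : GL (Fin 4) F, inN2 ν ∧
        (w₂ * ν) * γ * (w₂ * ν)⁻¹ ∈ cell w₃) := by
  have h12 : (1 : Fin 4) ⋖ 2 := Fin.covBy_iff.2 (Nat.covBy_iff_add_one_eq.2 rfl)
  obtain ⟨u₁', hu₁', hu₁'12, hu₁_eq⟩ := exists_eq_transvectionGL_mul_of_inN hu₁ h12.lt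
  obtain ⟨u₂', hu₂', hu₂'12, hu₂_eq⟩ := exists_eq_mul_transvectionGL_of_inN hu₂ h12.lt
  rw [← ha] at hu₁_eq
  rw [← hb] at hu₂_eq
  have hW : w₂ * w₃ * w₂ = w₂⁻¹ * w₃ * w₂ := by rw [inv_eq_self_of_val_eq_permM_swap hw₂]
  have hconj : (w₂ * transvectionGL h12.lt.ne b) * γ * (w₂ * transvectionGL h12.lt.ne b)⁻¹ =
      w₂ * transvectionGL h12.lt.ne (a + b) * w₂⁻¹ *
        ((w₂ * u₁' * w₂⁻¹) * (w₂ * t * w₂⁻¹)) * w₃ * (w₂ * u₂' * w₂⁻¹) := by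
    rw [hγ, hW, hu₁_eq, hu₂_eq, add_comm, transvectionGL_add]
    group
  have hU₁ := inN_conj_swap hw₂ h12 hu₁' hu₁'12
  have hT := inB_conj_swap hw₂ h12 (fun i j hji => ht i j hji.ne') (ht 1 2 (by decide))
  have hU₂ := inN_conj_swap hw₂ h12 hu₂' hu₂'12
  refine ⟨fun hab => ⟨_, inN2_transvectionGL b, ?_⟩, fun hab => ⟨_, inN2_transvectionGL b, ?_⟩⟩
  · obtain ⟨β, hβ, hβ_eq⟩ := exists_inB_conj_transvectionGL_eq_mul hw₂ h12.lt hab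
    have hmid := mul_mul_mem_cell_of_inB hw₂ h12 hw₃ (by decide)
      (inB_mul (inN_transvectionGL h12.lt (a + b)⁻¹).1 (inB_mul hU₁.1 hT))
    rw [hconj, hβ_eq]
    convert mem_cell_mul (mul_mem_cell hβ hmid) hU₂ using 1
    simp only [mul_assoc]
  · rw [hconj, hab, transvectionGL_zero, mul_one, mul_inv_cancel, one_mul]
    exact ⟨_, _, inB_mul hU₁.1 hT, hU₂, rfl⟩
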